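/- arXiv:1203.0772 — 2 statements merged into one kernel-verified Lean document; each statement's English description precedes it below -/
import Mathlib

section
/- Let (G,γ) be a ℤ²-colored graph. Then every subgraph G' of G with at least one edge, having n' vertices, m' edges, Λ(G') of rank k', c'₀ components with trivial ρ-image and c'₁ components with nontrivial ρ-image, satisfies m' ≤ 2n' + max{2k'−1,0} − 3c'₀ − 2c'₁, if and only if every subgraph G' of G with at least one edge, having n' vertices, m' edges, Λ(G') of rank k' and c' connected components in total, satisfies m' ≤ 2(n' + k') − 3 − 2(c'−1). -/
/-!
The first family of counts implies the second subgraph by subgraph, since `c'₀ + c'₁ = c' ≥ 1`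
and `k' = 0` forces `c'₁ = 0`. Conversely, split a subgraph into its components with trivial
ρ-image and the union `N` of the remaining `c'₁` components. Each trivial component is connected
with `Λ = 0`, so the second count gives it `m ≤ 2n - 3`; for `N` it gives
`m ≤ 2n + 2k' - 1 - 2c'₁`, because `Λ(N) ≤ Λ(G')` and `k' ≥ 1` as soon as `N` is nonempty.
Adding these up is the first count.
-/

open Matrix

noncomputable section

/-- A `Γ`-colored directed multigraph: vertex set `Fin n`, edge set `Fin m`,
each edge `e` directed from `tail e` to `head e` with color `color e`. -/
structure CGraph (Γ : Type) where
  n : ℕ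
  m : ℕ
  tail : Fin m → Fin n
  head : Fin m → Fin n
  color : Fin m → Γ

namespace CGraph

variable {Γ : Type} [AddCommGroup Γ]

/-- The vertices spanned by a subset `S` of edges (the subgraph determined by `S`). -/
def verts (G : CGraph Γ) (S : Finset (Fin G.m)) : Finset (Fin G.n) :=
  S.image G.tail ∪ S.image G.head

/-- One step of a walk in the subgraph `S`, recorded together with the running gain:
an edge may be traversed forwards (adding its color) or backwards (subtracting it). -/
def liftStep (G : CGraph Γ) (S : Finset (Fin G.m)) (x y : Fin G.n × Γ) : Prop :=
  ∃ e ∈ S,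
    (G.tail e = x.1 ∧ G.head e = y.1 ∧ y.2 = x.2 + G.color e) ∨
    (G.head e = x.1 ∧ G.tail e = y.1 ∧ y.2 = x.2 - G.color e)

/-- The ρ-image of the component of `v` in the subgraph `S`: the subgroup of `Γ`
formed by the gains of closed walks in `S` based at `v`. -/
def gainGroup (G : CGraph Γ) (S : Finset (Fin G.m)) (v : Fin G.n) : AddSubgroup Γ :=
  AddSubgroup.closure {g : Γ | Relation.ReflTransGen (G.liftStep S) (v, 0) (v, g)}

/-- Adjacency (through an edge of `S`) on the vertices of the subgraph `S`. -/
def adj (G : CGraph Γ) (S : Finset (Fin G.m))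
    (x y : {v : Fin G.n // v ∈ G.verts S}) : Prop :=
  ∃ e ∈ S, (G.tail e = x.1 ∧ G.head e = y.1) ∨ (G.tail e = y.1 ∧ G.head e = x.1)

/-- The connected components of the subgraph `S`. -/
def comps (G : CGraph Γ) (S : Finset (Fin G.m)) : Type :=
  Quot (G.adj S)

/-- The component `x` of the subgraph `S` has trivial ρ-image. -/
def TrivComp (G : CGraph Γ) (S : Finset (Fin G.m)) (x : G.comps S) : Prop :=
  ∃ v, Quot.mk (G.adj S) v = x ∧ G.gainGroup S v.1 = ⊥

/-- The number of connected components of `S` with trivial ρ-image. -/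
def c0 (G : CGraph Γ) (S : Finset (Fin G.m)) : ℕ :=
  Nat.card {x : G.comps S // G.TrivComp S x}

/-- The number of connected components of `S` with nontrivial ρ-image. -/
def c1 (G : CGraph Γ) (S : Finset (Fin G.m)) : ℕ :=
  Nat.card {x : G.comps S // ¬ G.TrivComp S x}

/-- The total number of connected components of the subgraph `S`. -/
def numComps (G : CGraph Γ) (S : Finset (Fin G.m)) : ℕ :=
  Nat.card (G.comps S)

/-- `Λ(S)`: the subgroup of `Γ` generated by the ρ-images of all components of `S`. -/
def Lambda (G : CGraph Γ) (S : Finset (Fin G.m)) : AddSubgroup Γ :=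
  ⨆ v ∈ G.verts S, G.gainGroup S v

end CGraph

/-- The rank of a subgroup of `ℤ²`. -/
def zrank (H : AddSubgroup (ℤ × ℤ)) : ℕ :=
  Module.finrank ℤ (AddSubgroup.toIntSubmodule H)

namespace Finset

theorem card_filter_exists_eq_sum {α β : Type*} [Fintype β] (s : Finset α) (R : α → β → Prop)
    [DecidablePred fun a => ∃ x, R a x] [∀ x, DecidablePred (R · x)]
    (hR : ∀ a x y, R a x → R a y → x = y) :
    #(s.filter fun a => ∃ x, R a x) = ∑ x, #(s.filter (R · x)) := by
  classical
  rw [← card_biUnion fun x _ y _ hxy => disjoint_filter.2 fun a _ hx hy => hxy (hR a x y hx hy)]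
  congr 1
  ext a
  simp

end Finset

namespace CGraph

open Finset Relation

variable {Γ : Type} {G : CGraph Γ} {S T : Finset (Fin G.m)}

instance : Finite (G.comps S) := Quot.finite _

instance : Fintype (G.comps S) := Fintype.ofFinite _

lemma tail_mem_verts {e : Fin G.m} (he : e ∈ S) : G.tail e ∈ G.verts S :=
  mem_union_left _ (mem_image_of_mem _ he)

lemma head_mem_verts {e : Fin G.m} (he : e ∈ S) : G.head e ∈ G.verts S :=
  mem_union_right _ (mem_image_of_mem _ he)

lemma verts_mono (h : T ⊆ S) : G.verts T ⊆ G.verts S :=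
  union_subset_union (image_subset_image h) (image_subset_image h)

@[simp]
lemma verts_empty : G.verts ∅ = ∅ := by
  simp [verts]

lemma mk_tail_eq_mk_head {e : Fin G.m} (he : e ∈ S) :
    Quot.mk (G.adj S) ⟨G.tail e, tail_mem_verts he⟩ =
      Quot.mk (G.adj S) ⟨G.head e, head_mem_verts he⟩ :=
  Quot.sound ⟨e, he, Or.inl ⟨rfl, rfl⟩⟩

lemma numComps_empty : G.numComps ∅ = 0 := by
  have : IsEmpty (G.comps ∅) := ⟨fun x => by
    induction x using Quot.ind with | _ v => simpa using v.2⟩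
  exact Nat.card_of_isEmpty

lemma one_le_numComps (hS : S.Nonempty) : 1 ≤ G.numComps S := by
  obtain ⟨e, he⟩ := hS
  have : Nonempty (G.comps S) := ⟨Quot.mk _ ⟨G.tail e, tail_mem_verts he⟩⟩
  exact Nat.card_pos

lemma mem_verts {v : Fin G.n} : v ∈ G.verts S ↔ ∃ e ∈ S, G.tail e = v ∨ G.head e = v := by
  simp only [verts, mem_union, mem_image]
  constructor
  · rintro (⟨e, he, rfl⟩ | ⟨e, he, rfl⟩)
    exacts [⟨e, he, Or.inl rfl⟩, ⟨e, he, Or.inr rfl⟩]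
  · rintro ⟨e, he, rfl | rfl⟩
    exacts [Or.inl ⟨e, he, rfl⟩, Or.inr ⟨e, he, rfl⟩]

lemma adj_mono (h : T ⊆ S) {a b : {v // v ∈ G.verts T}} (hab : G.adj T a b) :
    G.adj S ⟨a, verts_mono h a.2⟩ ⟨b, verts_mono h b.2⟩ :=
  let ⟨e, he, hab⟩ := hab; ⟨e, h he, hab⟩

variable (G S) in
def InComps (P : G.comps S → Prop) (v : Fin G.n) : Prop :=
  ∃ h : v ∈ G.verts S, P (Quot.mk _ ⟨v, h⟩)

variable (G S) in
open Classical in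
/-- The components of `S` satisfying `P`, as an edge set: an edge lies in the component of its
tail. -/
def compUnion (P : G.comps S → Prop) : Finset (Fin G.m) :=
  S.filter fun e => G.InComps S P (G.tail e)

variable {P : G.comps S → Prop}

lemma inComps_iff {v : Fin G.n} (h : v ∈ G.verts S) :
    G.InComps S P v ↔ P (Quot.mk _ ⟨v, h⟩) :=
  ⟨fun ⟨_, hP⟩ => hP, fun hP => ⟨h, hP⟩⟩

lemma inComps_iff_of_mk_eq {u w : {v // v ∈ G.verts S}}
    (h : Quot.mk (G.adj S) u = Quot.mk (G.adj S) w) : G.InComps S P u ↔ G.InComps S P w := by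
  rw [inComps_iff u.2, inComps_iff w.2, h]

lemma inComps_tail_iff {e : Fin G.m} (he : e ∈ S) :
    G.InComps S P (G.tail e) ↔ G.InComps S P (G.head e) :=
  inComps_iff_of_mk_eq (mk_tail_eq_mk_head he)

lemma inComps_not_iff {v : Fin G.n} (h : v ∈ G.verts S) :
    G.InComps S (¬P ·) v ↔ ¬G.InComps S P v := by
  rw [inComps_iff h, inComps_iff h]

open Classical in
lemma compUnion_subset : G.compUnion S P ⊆ S := filter_subset _ _

lemma mem_compUnion {e : Fin G.m} :
    e ∈ G.compUnion S P ↔ e ∈ S ∧ G.InComps S P (G.tail e) := by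
  classical
  exact mem_filter

lemma mem_verts_compUnion {v : Fin G.n} : v ∈ G.verts (G.compUnion S P) ↔ G.InComps S P v := by
  constructor
  · intro hv
    obtain ⟨e, he, rfl | rfl⟩ := mem_verts.1 hv
    · exact (mem_compUnion.1 he).2
    · exact (inComps_tail_iff (mem_compUnion.1 he).1).1 (mem_compUnion.1 he).2
  · intro hv
    obtain ⟨e, he, rfl | rfl⟩ := mem_verts.1 hv.1
    · exact tail_mem_verts (mem_compUnion.2 ⟨he, hv⟩)
    · exact head_mem_verts (mem_compUnion.2 ⟨he, (inComps_tail_iff he).2 hv⟩)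

lemma verts_compUnion [DecidablePred (G.InComps S P)] :
    G.verts (G.compUnion S P) = (G.verts S).filter (G.InComps S P) := by
  ext v
  rw [mem_verts_compUnion, mem_filter]
  exact ⟨fun hv => ⟨hv.1, hv⟩, And.right⟩

lemma mk_compUnion_eq_of_eqvGen {a b : {v // v ∈ G.verts S}} (h : EqvGen (G.adj S) a b)
    (ha : a.1 ∈ G.verts (G.compUnion S P)) (hb : b.1 ∈ G.verts (G.compUnion S P)) :
    Quot.mk (G.adj (G.compUnion S P)) ⟨a, ha⟩ = Quot.mk _ ⟨b, hb⟩ := by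
  induction h with
  | rel a b hab =>
    obtain ⟨e, he, hab⟩ := hab
    have hin : G.InComps S P (G.tail e) := by
      rcases hab with ⟨h, -⟩ | ⟨-, h⟩
      · exact h ▸ mem_verts_compUnion.1 ha
      · exact (inComps_tail_iff he).2 (h ▸ mem_verts_compUnion.1 ha)
    exact Quot.sound ⟨e, mem_compUnion.2 ⟨he, hin⟩, hab⟩
  | refl => rfl
  | symm _ _ _ ih => exact (ih hb ha).symm
  | trans a b c hab _ ih₁ ih₂ =>
    have hb : b.1 ∈ G.verts (G.compUnion S P) :=
      mem_verts_compUnion.2 ((inComps_iff_of_mk_eq (Quot.eqvGen_sound hab)).1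
        (mem_verts_compUnion.1 ha))
    exact (ih₁ ha hb).trans (ih₂ hb ‹_›)

lemma numComps_compUnion : G.numComps (G.compUnion S P) = Nat.card {x // P x} := by
  let f : G.comps (G.compUnion S P) → {x // P x} :=
    Quot.lift (fun u => ⟨Quot.mk _ ⟨u, verts_mono compUnion_subset u.2⟩,
        (inComps_iff _).1 (mem_verts_compUnion.1 u.2)⟩)
      fun _ _ hab => Subtype.ext (Quot.sound (adj_mono compUnion_subset hab))
  refine Nat.card_eq_of_bijective f ⟨fun a b hab => ?_, fun ⟨x, hx⟩ => ?_⟩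
  · induction a using Quot.ind
    induction b using Quot.ind
    exact mk_compUnion_eq_of_eqvGen (Quot.eqvGen_exact (congrArg Subtype.val hab)) _ _
  · obtain ⟨v, rfl⟩ := Quot.exists_rep x
    exact ⟨Quot.mk _ ⟨v, mem_verts_compUnion.2 ((inComps_iff v.2).2 hx)⟩, rfl⟩

lemma numComps_compUnion_eq (x : G.comps S) : G.numComps (G.compUnion S (· = x)) = 1 := by
  rw [numComps_compUnion]
  exact Nat.card_unique

lemma compUnion_eq_nonempty (x : G.comps S) : (G.compUnion S (· = x)).Nonempty := by
  obtain ⟨v, rfl⟩ := Quot.exists_rep x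
  have hv : v.1 ∈ G.verts (G.compUnion S (· = Quot.mk _ v)) := mem_verts_compUnion.2 ⟨v.2, rfl⟩
  rw [nonempty_iff_ne_empty]
  rintro h
  simp [h] at hv

lemma inComps_iff_exists {v : Fin G.n} :
    G.InComps S P v ↔ ∃ x : {x // P x}, G.InComps S (· = x.1) v :=
  ⟨fun ⟨h, hP⟩ => ⟨⟨_, hP⟩, h, rfl⟩, fun ⟨x, h, hx⟩ => ⟨h, hx ▸ x.2⟩⟩

open Classical in
lemma card_filter_inComps {α : Type*} (s : Finset α) (f : α → Fin G.n) :
    #(s.filter fun a => G.InComps S P (f a)) =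
      ∑ x : {x // P x}, #(s.filter fun a => G.InComps S (· = x.1) (f a)) := by
  rw [← card_filter_exists_eq_sum s fun a (x : {x // P x}) => G.InComps S (· = x.1) (f a)]
  · exact congrArg card (filter_congr fun _ _ => inComps_iff_exists)
  · rintro a x y ⟨h, hx⟩ ⟨h', hy⟩
    exact Subtype.ext (hx.symm.trans hy)

lemma card_filter_inComps_add_not {α : Type*} (s : Finset α) (f : α → Fin G.n)
    (hf : ∀ a ∈ s, f a ∈ G.verts S) [DecidablePred fun a => G.InComps S P (f a)]
    [DecidablePred fun a => G.InComps S (¬P ·) (f a)] :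
    #(s.filter fun a => G.InComps S P (f a)) + #(s.filter fun a => G.InComps S (¬P ·) (f a)) =
      #s := by
  rw [filter_congr fun a ha => inComps_not_iff (P := P) (hf a ha)]
  exact card_filter_add_card_filter_not _

open Classical in
lemma card_compUnion :
    #(G.compUnion S P) = ∑ x : {x // P x}, #(G.compUnion S (· = x.1)) :=
  card_filter_inComps S G.tail

open Classical in
lemma card_verts_compUnion :
    #(G.verts (G.compUnion S P)) = ∑ x : {x // P x}, #(G.verts (G.compUnion S (· = x.1))) := by
  simp only [verts_compUnion]
  exact card_filter_inComps (G.verts S) id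

open Classical in
lemma card_compUnion_add_card_compUnion_not :
    #(G.compUnion S P) + #(G.compUnion S (¬P ·)) = #S :=
  card_filter_inComps_add_not S G.tail fun _ => tail_mem_verts

open Classical in
lemma card_verts_compUnion_add_card_verts_compUnion_not :
    #(G.verts (G.compUnion S P)) + #(G.verts (G.compUnion S (¬P ·))) = #(G.verts S) := by
  rw [verts_compUnion, verts_compUnion]
  exact card_filter_inComps_add_not (G.verts S) id fun _ h => h

lemma card_compUnion_le (a b : ℤ)
    (h : ∀ x, P x → (#(G.compUnion S (· = x)) : ℤ) ≤ a * #(G.verts (G.compUnion S (· = x))) - b) :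
    (#(G.compUnion S P) : ℤ) ≤ a * #(G.verts (G.compUnion S P)) - b * Nat.card {x // P x} := by
  classical
  rw [card_compUnion, card_verts_compUnion, Nat.card_eq_fintype_card, ← card_univ]
  push_cast
  rw [mul_sum, card_eq_sum_ones, Nat.cast_sum, mul_sum, ← sum_sub_distrib]
  exact sum_le_sum fun x _ => by simpa using h x.1 x.2

variable [AddCommGroup Γ]

lemma c0_add_c1 : G.c0 S + G.c1 S = G.numComps S := by
  classical
  rw [c0, c1, numComps, Nat.card_eq_fintype_card, Nat.card_eq_fintype_card,
    Nat.card_eq_fintype_card, Fintype.card_subtype_compl]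
  exact Nat.add_sub_of_le (Fintype.card_subtype_le _)

lemma liftStep_symm {x y : Fin G.n × Γ} (h : G.liftStep S x y) : G.liftStep S y x := by
  obtain ⟨e, he, ⟨h₁, h₂, h₃⟩ | ⟨h₁, h₂, h₃⟩⟩ := h
  · exact ⟨e, he, Or.inr ⟨h₂, h₁, by rw [h₃]; abel⟩⟩
  · exact ⟨e, he, Or.inl ⟨h₂, h₁, by rw [h₃]; abel⟩⟩

lemma liftStep_add_right (t : Γ) {x y : Fin G.n × Γ} (h : G.liftStep S x y) :
    G.liftStep S (x.1, x.2 + t) (y.1, y.2 + t) := by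
  obtain ⟨e, he, ⟨h₁, h₂, h₃⟩ | ⟨h₁, h₂, h₃⟩⟩ := h
  · exact ⟨e, he, Or.inl ⟨h₁, h₂, by dsimp only; rw [h₃]; abel⟩⟩
  · exact ⟨e, he, Or.inr ⟨h₁, h₂, by dsimp only; rw [h₃]; abel⟩⟩

lemma liftStep_mono (h : T ⊆ S) {x y : Fin G.n × Γ} (hxy : G.liftStep T x y) :
    G.liftStep S x y :=
  let ⟨e, he, hxy⟩ := hxy; ⟨e, h he, hxy⟩

lemma gainGroup_mono (h : T ⊆ S) (v : Fin G.n) : G.gainGroup T v ≤ G.gainGroup S v :=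
  AddSubgroup.closure_mono fun _ hg => ReflTransGen.mono (fun _ _ => liftStep_mono h) _ _ hg

/-- Conjugating a closed walk at `v` by a step `u → v` gives a closed walk at `u` with the
same gain. -/
lemma gainGroup_le_of_liftStep {u v : Fin G.n} {c : Γ} (h : G.liftStep S (u, 0) (v, c)) :
    G.gainGroup S v ≤ G.gainGroup S u := by
  refine (AddSubgroup.closure_le _).2 fun g hg => AddSubgroup.subset_closure ?_
  have hloop : ReflTransGen (G.liftStep S) (v, 0 + c) (v, g + c) :=
    hg.lift (fun x => (x.1, x.2 + c)) fun _ _ => liftStep_add_right c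
  have hback : G.liftStep S (v, c + g) (u, 0 + g) := liftStep_add_right g (liftStep_symm h)
  rw [zero_add] at hloop hback
  exact ((ReflTransGen.single h).trans hloop).tail (by rwa [add_comm])

lemma gainGroup_eq_of_liftStep {u v : Fin G.n} {c : Γ} (h : G.liftStep S (u, 0) (v, c)) :
    G.gainGroup S u = G.gainGroup S v := by
  have hback : G.liftStep S (v, c + -c) (u, 0 + -c) := liftStep_add_right (-c) (liftStep_symm h)
  rw [add_neg_cancel] at hback
  exact le_antisymm (gainGroup_le_of_liftStep hback) (gainGroup_le_of_liftStep h)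

lemma gainGroup_eq_of_adj {a b : {v // v ∈ G.verts S}} (h : G.adj S a b) :
    G.gainGroup S a.1 = G.gainGroup S b.1 := by
  obtain ⟨e, he, ⟨ha, hb⟩ | ⟨hb, ha⟩⟩ := h
  · exact gainGroup_eq_of_liftStep (c := G.color e) ⟨e, he, Or.inl ⟨ha, hb, (zero_add _).symm⟩⟩
  · exact gainGroup_eq_of_liftStep (c := -G.color e) ⟨e, he, Or.inr ⟨ha, hb, (zero_sub _).symm⟩⟩

lemma gainGroup_eq_of_mk_eq {u w : {v // v ∈ G.verts S}}
    (h : Quot.mk (G.adj S) u = Quot.mk (G.adj S) w) :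
    G.gainGroup S u.1 = G.gainGroup S w.1 := by
  have h' := congrArg (Quot.lift (fun v : {v // v ∈ G.verts S} => G.gainGroup S v.1)
    fun _ _ => gainGroup_eq_of_adj) h
  exact h'

lemma liftStep_compUnion {x y : Fin G.n × Γ} (h : G.liftStep S x y) (hx : G.InComps S P x.1) :
    G.liftStep (G.compUnion S P) x y ∧ G.InComps S P y.1 := by
  obtain ⟨u, s⟩ := x
  obtain ⟨w, t⟩ := y
  obtain ⟨e, he, ⟨h₁, h₂, h₃⟩ | ⟨h₁, h₂, h₃⟩⟩ := h
  · subst h₁ h₂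
    exact ⟨⟨e, mem_compUnion.2 ⟨he, hx⟩, Or.inl ⟨rfl, rfl, h₃⟩⟩, (inComps_tail_iff he).1 hx⟩
  · subst h₁ h₂
    have ht := (inComps_tail_iff he).2 hx
    exact ⟨⟨e, mem_compUnion.2 ⟨he, ht⟩, Or.inr ⟨rfl, rfl, h₃⟩⟩, ht⟩

lemma gainGroup_compUnion {v : Fin G.n} (hv : G.InComps S P v) :
    G.gainGroup (G.compUnion S P) v = G.gainGroup S v := by
  refine le_antisymm (gainGroup_mono compUnion_subset v) (AddSubgroup.closure_mono ?_)
  intro g hg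
  suffices ∀ y, ReflTransGen (G.liftStep S) (v, 0) y →
      ReflTransGen (G.liftStep (G.compUnion S P)) (v, 0) y ∧ G.InComps S P y.1 from
    (this _ hg).1
  intro y hy
  induction hy with
  | refl => exact ⟨ReflTransGen.refl, hv⟩
  | tail _ hstep ih =>
    obtain ⟨hstep', hc⟩ := liftStep_compUnion hstep ih.2
    exact ⟨ih.1.tail hstep', hc⟩

lemma gainGroup_le_Lambda {v : Fin G.n} (hv : v ∈ G.verts S) : G.gainGroup S v ≤ G.Lambda S :=
  le_iSup₂_of_le v hv le_rfl

lemma Lambda_mono (h : T ⊆ S) : G.Lambda T ≤ G.Lambda S :=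
  iSup₂_le fun v hv => (gainGroup_mono h v).trans (gainGroup_le_Lambda (verts_mono h hv))

lemma Lambda_eq_bot_iff : G.Lambda S = ⊥ ↔ ∀ v ∈ G.verts S, G.gainGroup S v = ⊥ := by
  simp only [Lambda, iSup_eq_bot]

lemma trivComp_mk_iff {v : Fin G.n} (h : v ∈ G.verts S) :
    G.TrivComp S (Quot.mk _ ⟨v, h⟩) ↔ G.gainGroup S v = ⊥ :=
  ⟨fun ⟨_, hw, hbot⟩ => gainGroup_eq_of_mk_eq hw ▸ hbot, fun hbot => ⟨_, rfl, hbot⟩⟩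

lemma Lambda_eq_bot_iff_forall_trivComp : G.Lambda S = ⊥ ↔ ∀ x, G.TrivComp S x := by
  rw [Lambda_eq_bot_iff]
  refine ⟨fun h x => ?_, fun h v hv => (trivComp_mk_iff hv).1 (h _)⟩
  obtain ⟨v, rfl⟩ := Quot.exists_rep x
  exact (trivComp_mk_iff v.2).2 (h v v.2)

lemma c1_eq_zero_iff : G.c1 S = 0 ↔ G.Lambda S = ⊥ := by
  rw [c1, Finite.card_eq_zero_iff, isEmpty_subtype, Lambda_eq_bot_iff_forall_trivComp]
  simp only [not_not]

lemma Lambda_compUnion_eq_bot (hP : ∀ x, P x → G.TrivComp S x) :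
    G.Lambda (G.compUnion S P) = ⊥ := by
  refine Lambda_eq_bot_iff.2 fun v hv => ?_
  obtain ⟨hvS, hPv⟩ := mem_verts_compUnion.1 hv
  rw [gainGroup_compUnion ⟨hvS, hPv⟩]
  exact (trivComp_mk_iff hvS).1 (hP _ hPv)

end CGraph

lemma zrank_eq_zero_iff {H : AddSubgroup (ℤ × ℤ)} : zrank H = 0 ↔ H = ⊥ := by
  rw [zrank, Submodule.finrank_eq_zero, ← map_bot (AddSubgroup.toIntSubmodule (M := ℤ × ℤ)),
    AddSubgroup.toIntSubmodule.injective.eq_iff]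

lemma zrank_mono {H K : AddSubgroup (ℤ × ℤ)} (h : H ≤ K) : zrank H ≤ zrank K :=
  Submodule.finrank_mono (AddSubgroup.toIntSubmodule.monotone h)

namespace CGraph

open Finset

variable {G : CGraph (ℤ × ℤ)} {S : Finset (Fin G.m)}

variable (G) in
def ColoredLamanCount (S : Finset (Fin G.m)) : Prop :=
  (#S : ℤ) ≤ 2 * #(G.verts S) + max (2 * (zrank (G.Lambda S) : ℤ) - 1) 0
    - 3 * (G.c0 S : ℤ) - 2 * (G.c1 S : ℤ)

variable (G) in
def AltColoredLamanCount (S : Finset (Fin G.m)) : Prop :=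
  (#S : ℤ) ≤ 2 * (#(G.verts S) + (zrank (G.Lambda S) : ℤ)) - 3 - 2 * ((G.numComps S : ℤ) - 1)

lemma zrank_Lambda_eq_zero_iff : zrank (G.Lambda S) = 0 ↔ G.c1 S = 0 := by
  rw [zrank_eq_zero_iff, c1_eq_zero_iff]

lemma altColoredLamanCount_of_coloredLamanCount (hS : S.Nonempty)
    (h : G.ColoredLamanCount S) : G.AltColoredLamanCount S := by
  have hc : G.c0 S + G.c1 S = G.numComps S := c0_add_c1
  have hc_pos : 1 ≤ G.numComps S := one_le_numComps hS
  have hk : zrank (G.Lambda S) = 0 ↔ G.c1 S = 0 := zrank_Lambda_eq_zero_iff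
  unfold ColoredLamanCount at h
  unfold AltColoredLamanCount
  omega

lemma coloredLamanCount_of_forall_altColoredLamanCount
    (h : ∀ T ⊆ S, T.Nonempty → G.AltColoredLamanCount T) : G.ColoredLamanCount S := by
  set N := G.compUnion S (¬G.TrivComp S ·)
  have htriv : (#(G.compUnion S (G.TrivComp S)) : ℤ) ≤
      2 * #(G.verts (G.compUnion S (G.TrivComp S))) - 3 * G.c0 S := by
    refine card_compUnion_le 2 3 fun x hx => ?_
    have hcount := h _ compUnion_subset (compUnion_eq_nonempty x)
    rw [AltColoredLamanCount, numComps_compUnion_eq,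
      zrank_eq_zero_iff.2 (Lambda_compUnion_eq_bot fun y hy => hy ▸ hx)] at hcount
    omega
  have hnontriv : (#N : ℤ) ≤
      2 * #(G.verts N) + max (2 * (zrank (G.Lambda S) : ℤ) - 1) 0 - 2 * G.c1 S := by
    have hc1 : G.numComps N = G.c1 S := numComps_compUnion
    rcases N.eq_empty_or_nonempty with hN | hN
    · rw [hN, numComps_empty] at hc1
      simp [hN, ← hc1]
    · have hcount := h N compUnion_subset hN
      have hk : zrank (G.Lambda N) ≤ zrank (G.Lambda S) :=
        zrank_mono (Lambda_mono compUnion_subset)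
      have hk0 : zrank (G.Lambda S) ≠ 0 :=
        zrank_Lambda_eq_zero_iff.not.2 (by have := one_le_numComps (G := G) hN; omega)
      unfold AltColoredLamanCount at hcount
      omega
  have hE : #(G.compUnion S (G.TrivComp S)) + #N = #S :=
    card_compUnion_add_card_compUnion_not
  have hV : #(G.verts (G.compUnion S (G.TrivComp S))) + #(G.verts N) = #(G.verts S) :=
    card_verts_compUnion_add_card_verts_compUnion_not
  unfold ColoredLamanCount
  omega

end CGraph

/-- For a `ℤ²`-colored graph, the colored-Laman sparsity counts
`m' ≤ 2n' + max(2k'-1,0) - 3c'₀ - 2c'₁` hold for all subgraphs iff the alternative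
counts `m' ≤ 2(n' + k') - 3 - 2(c' - 1)` hold for all subgraphs. -/
theorem coloredLaman_counts_equiv (G : CGraph (ℤ × ℤ)) :
    (∀ S : Finset (Fin G.m), S.Nonempty →
      (S.card : ℤ) ≤ 2 * (G.verts S).card
        + max (2 * (zrank (G.Lambda S) : ℤ) - 1) 0
        - 3 * (G.c0 S : ℤ) - 2 * (G.c1 S : ℤ)) ↔
    (∀ S : Finset (Fin G.m), S.Nonempty →
      (S.card : ℤ) ≤ 2 * ((G.verts S).card + (zrank (G.Lambda S) : ℤ))
        - 3 - 2 * ((G.numComps S : ℤ) - 1)) :=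
  ⟨fun h S hS => CGraph.altColoredLamanCount_of_coloredLamanCount hS (h S hS),
    fun h _ _ => CGraph.coloredLamanCount_of_forall_altColoredLamanCount fun T _ hT => h T hT⟩
end
end

section
/- Let λ, μ, ν ∈ ℝ and let M = [[λ, μ],[ν, −λ]]. For any invertible real 2×2 matrix A = [[a,b],[c,d]], let M' = [[p,q],[r,s]] be the matrix det(A)⁻¹·[[d,−c],[−b,a]]·M (i.e., M' = (A⁻¹)ᵀ·M). Then d·p − c·q − b·r + a·s = det(A)⁻¹·( λ·(d² + b² − a² − c²) − (μ+ν)·(ab + cd) ). Consequently, if μ + ν ≠ 0, there exists an invertible A such that d·p − c·q − b·r + a·s ≠ 0; that is, the infinitesimal motion obtained by applying a generic linear transformation does not preserve the area of the fundamental domain. -/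
open Matrix

/-- Let `M = [[λ, μ], [ν, -λ]]` be traceless. For any invertible
`A = [[a,b],[c,d]]`, setting `M' = det(A)⁻¹ · [[d,-c],[-b,a]] · M = (A⁻¹)ᵀ · M`, the
area form evaluates as
`d·M'₁₁ - c·M'₁₂ - b·M'₂₁ + a·M'₂₂ = det(A)⁻¹·(λ(d² + b² - a² - c²) - (μ+ν)(ab + cd))`;
consequently, if `μ + ν ≠ 0` there is an invertible `A` for which this quantity is
nonzero, i.e. the transformed infinitesimal motion does not preserve the area of the
fundamental domain. -/
theorem area_row_not_affinely_invariant (lam mu nu : ℝ) :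
    (∀ a b c d : ℝ, (!![a, b; c, d] : Matrix (Fin 2) (Fin 2) ℝ).det ≠ 0 →
      ∀ M' : Matrix (Fin 2) (Fin 2) ℝ,
        M' = (!![a, b; c, d] : Matrix (Fin 2) (Fin 2) ℝ).det⁻¹ •
          (!![d, -c; -b, a] * !![lam, mu; nu, -lam]) →
        d * M' 0 0 - c * M' 0 1 - b * M' 1 0 + a * M' 1 1 =
          (!![a, b; c, d] : Matrix (Fin 2) (Fin 2) ℝ).det⁻¹ *
            (lam * (d ^ 2 + b ^ 2 - a ^ 2 - c ^ 2) - (mu + nu) * (a * b + c * d))) ∧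
    (mu + nu ≠ 0 →
      ∃ a b c d : ℝ, (!![a, b; c, d] : Matrix (Fin 2) (Fin 2) ℝ).det ≠ 0 ∧
        ∀ M' : Matrix (Fin 2) (Fin 2) ℝ,
          M' = (!![a, b; c, d] : Matrix (Fin 2) (Fin 2) ℝ).det⁻¹ •
            (!![d, -c; -b, a] * !![lam, mu; nu, -lam]) →
          d * M' 0 0 - c * M' 0 1 - b * M' 1 0 + a * M' 1 1 ≠ 0) := by
  constructor
  · intro a b c d _ M' hM'
    subst hM'
    simp [Matrix.smul_apply, Matrix.mul_apply, Fin.sum_univ_two, Matrix.det_fin_two_of]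
    ring
  · intro hmn
    -- use A = [[1, t], [0, 1]], value = det⁻¹ * (lam * t^2 - (mu+nu) * t)
    have key : ∀ t : ℝ, lam * t ^ 2 - (mu + nu) * t ≠ 0 →
        ∃ a b c d : ℝ, (!![a, b; c, d] : Matrix (Fin 2) (Fin 2) ℝ).det ≠ 0 ∧
        ∀ M' : Matrix (Fin 2) (Fin 2) ℝ,
          M' = (!![a, b; c, d] : Matrix (Fin 2) (Fin 2) ℝ).det⁻¹ •
            (!![d, -c; -b, a] * !![lam, mu; nu, -lam]) →
          d * M' 0 0 - c * M' 0 1 - b * M' 1 0 + a * M' 1 1 ≠ 0 := by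
      intro t ht
      refine ⟨1, t, 0, 1, by simp [Matrix.det_fin_two_of], ?_⟩
      intro M' hM'
      subst hM'
      intro h
      simp [Matrix.smul_apply, Matrix.mul_apply, Fin.sum_univ_two, Matrix.det_fin_two_of] at h
      apply ht
      nlinarith [h]
    by_cases hl : lam = mu + nu
    · rcases key 2 (by rw [hl]; intro h; apply hmn; nlinarith) with ⟨a, b, c, d, h1, h2⟩
      exact ⟨a, b, c, d, h1, h2⟩
    · rcases key 1 (by intro h; apply hl; nlinarith) with ⟨a, b, c, d, h1, h2⟩
      exact ⟨a, b, c, d, h1, h2⟩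
end
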